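/- Fix m, n ≥ 1. Under the bijection (T1,T2) ↦ P_{[T1,T2]} between Tamari intervals of binary trees of size nm and interval-posets of size nm, the pairs T1 ≤ T2 in which T1 satisfies the m-binary condition (im ⊴_{T1} im−1 ⊴_{T1} ⋯ ⊴_{T1} (i−1)m+1 for all 1 ≤ i ≤ n; this forces T2 to satisfy it as well) correspond exactly to the m-interval-posets of size n. Hence the m-interval-posets of size n are in bijection with the intervals of the m-Tamari lattice T_n^(m). -/

import Mathlib

/-!
Right rotations only add relations to the final forest and only remove relations from the initial
forest. Hence, along a Tamari interval `[T₁, T₂]`, every generating relation of `P_{[T₁,T₂]}`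
holds in both trees, so the generated order is just `dec T₁ ∪ inc T₂`; in particular `T₁` and `T₂`
are read back from its decreasing and increasing relations. Conversely an interval-poset `I`
determines `T₁` and `T₂` by choosing roots recursively (the least label above all larger ones,
resp. the largest label above all smaller ones), and `T₁ ≤ T₂` because `dec T₁ ⊆ dec T₂`: the
profile `b ↦ max (subtree of b)` grows under rotations, and while it is strictly below the profile
of the target some rotation keeps it below.

The `m`-condition consists of decreasing relations `i+1 ⊴ i`, so it holds in `T₁` exactly when it
holds in `P_{[T₁,T₂]}`, and then in `T₂` as well.
-/

/-- Planar binary trees: empty, or a node with a left and a right subtree. -/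
inductive BinTree : Type where
  | leaf : BinTree
  | node : BinTree → BinTree → BinTree
  deriving DecidableEq

namespace BinTree

/-- Size: number of internal nodes. -/
def size : BinTree → ℕ
  | leaf => 0
  | node l r => l.size + r.size + 1

/-- `sub T o a b` : in the binary-search-tree labelling of `T` shifted by `o`
(its labels are `o+1, …, o+T.size`), the node labelled `a` lies in the subtree
rooted at the node labelled `b`, i.e. `a ⊴_T b`. -/
def sub : BinTree → ℕ → ℕ → ℕ → Prop
  | leaf, _, _, _ => False
  | node l r, o, a, b =>
      (b = o + l.size + 1 ∧ o + 1 ≤ a ∧ a ≤ o + l.size + r.size + 1) ∨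
      l.sub o a b ∨ r.sub (o + l.size + 1) a b

/-- One right rotation, applied at any position of the tree. -/
inductive Rot : BinTree → BinTree → Prop
  | base (A B C : BinTree) : Rot (node (node A B) C) (node A (node B C))
  | left {l l' : BinTree} (r : BinTree) : Rot l l' → Rot (node l r) (node l' r)
  | right (l : BinTree) {r r' : BinTree} : Rot r r' → Rot (node l r) (node l r')

end BinTree

/-- Tamari order: reflexive-transitive closure of right rotation. -/
def tamariLE : BinTree → BinTree → Prop := Relation.ReflTransGen BinTree.Rot

/-- `incRel T a c` : `a` is below `c` in the initial forest `inc T`. -/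
def incRel (T : BinTree) (a c : ℕ) : Prop := a < c ∧ T.sub 0 a c

/-- `decRel T c a` : `c` is below `a` in the final forest `dec T`. -/
def decRel (T : BinTree) (c a : ℕ) : Prop := a < c ∧ T.sub 0 c a

/-- An interval-poset: a partial order on `{1, …, n}` in which, whenever
`a ⊴ c` and `a < c`, all `a < b < c` satisfy `b ⊴ c`, and whenever `c ⊴ a` and
`a < c`, all `a < b < c` satisfy `b ⊴ a`.  `rel x y` means "`x` is below `y`". -/
structure IntervalPoset : Type where
  n : ℕ
  rel : ℕ → ℕ → Prop
  supp : ∀ a b, rel a b → 1 ≤ a ∧ a ≤ n ∧ 1 ≤ b ∧ b ≤ n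
  refl : ∀ a, 1 ≤ a → a ≤ n → rel a a
  antisymm : ∀ a b, rel a b → rel b a → a = b
  trans : ∀ a b c, rel a b → rel b c → rel a c
  incCond : ∀ a b c, rel a c → a < b → b < c → rel b c
  decCond : ∀ a b c, rel c a → a < b → b < c → rel b a

/-- The partial order on `{1, …, n}` generated by a family `r` of relations. -/
def genClos (n : ℕ) (r : ℕ → ℕ → Prop) : ℕ → ℕ → Prop :=
  fun a b => (a = b ∧ 1 ≤ a ∧ a ≤ n) ∨ Relation.TransGen r a b

/-- The relation of the interval-poset `P_{[T1,T2]}` of a Tamari interval: the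
partial order on `{1, …, n}` generated by the relations of `dec T1` together
with those of `inc T2`. -/
def pairRel (n : ℕ) (T1 T2 : BinTree) : ℕ → ℕ → Prop :=
  genClos n (fun x y => decRel T1 x y ∨ incRel T2 x y)

/-- Graft the tree `B` at the leftmost leaf of `S` (as left child of the
leftmost node of `S`; if `S` is empty the result is `B`). -/
def graftL : BinTree → BinTree → BinTree
  | BinTree.leaf, B => B
  | BinTree.node l r, B => BinTree.node (graftL l B) r

/-- Auxiliary construction: from `[T_{R_i}, …, T_{R_m}]`, the subtree rooted at
the `i`-th new node `x` (empty left child, right subtree `T_{R_i}` with the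
next new node grafted at its leftmost leaf). -/
def buildAux : List BinTree → BinTree
  | [] => BinTree.leaf
  | S :: rest => BinTree.node BinTree.leaf (graftL S (buildAux rest))

/-- The right subtree of the root of an `m`-binary tree built from
`[T_{R_1}, …, T_{R_m}]`: it is `T_{R_1}` with, grafted at its leftmost leaf, a
new node carrying `T_{R_2}` (with, grafted at the leftmost leaf of `T_{R_2}`, a
new node carrying `T_{R_3}`, and so on). -/
def buildRight : List BinTree → BinTree
  | [] => BinTree.leaf
  | S :: rest => graftL S (buildAux rest)

/-- `m`-binary trees, defined recursively: the empty tree, or a root whose left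
subtree is an `m`-binary tree `T_L` and whose right subtree is built from a
list `[T_{R_1}, …, T_{R_m}]` of `m`-binary trees by the grafting procedure. -/
inductive IsMBinary (m : ℕ) : BinTree → Prop
  | leaf : IsMBinary m BinTree.leaf
  | node (TL : BinTree) (TRs : List BinTree) :
      TRs.length = m → IsMBinary m TL → (∀ S ∈ TRs, IsMBinary m S) →
      IsMBinary m (BinTree.node TL (buildRight TRs))

/-- A chain of `k` nodes linked by right edges. -/
def rightChain : ℕ → BinTree
  | 0 => BinTree.leaf
  | k + 1 => BinTree.node BinTree.leaf (rightChain k)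

/-- The `(n,m)`-comb: `n` nodes on the leftmost branch, each carrying as right
subtree a chain of `m − 1` nodes linked by right edges. -/
def comb (m : ℕ) : ℕ → BinTree
  | 0 => BinTree.leaf
  | n + 1 => BinTree.node (comb m n) (rightChain (m - 1))

/-- The condition `i·m ⊴_T i·m−1 ⊴_T ⋯ ⊴_T (i−1)·m+1` for all `1 ≤ i ≤ n`,
stated on consecutive labels. -/
def mCond (m n : ℕ) (T : BinTree) : Prop :=
  ∀ i j, 1 ≤ i → i ≤ n → 1 ≤ j → j < m → T.sub 0 (i * m - j + 1) (i * m - j)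

/-- An `m`-interval-poset of size `n` : an interval-poset of size `n·m`
satisfying `i·m ⊴ i·m−1 ⊴ ⋯ ⊴ i·m−(m−1)` for all `1 ≤ i ≤ n`. -/
def IsMIntervalPoset (m n : ℕ) (I : IntervalPoset) : Prop :=
  I.n = n * m ∧
    ∀ i j, 1 ≤ i → i ≤ n → 1 ≤ j → j < m → I.rel (i * m - j + 1) (i * m - j)

namespace BinTree

theorem size_node (l r : BinTree) : (node l r).size = l.size + r.size + 1 := rfl

theorem sub_bounds {T : BinTree} {o a b : ℕ} (h : T.sub o a b) :
    o < a ∧ a ≤ o + T.size ∧ o < b ∧ b ≤ o + T.size := by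
  induction T generalizing o with
  | leaf => exact h.elim
  | node l r ihl ihr =>
    rw [size_node]
    rcases h with ⟨_, _, _⟩ | h | h
    · omega
    · have := ihl h; omega
    · have := ihr h; omega

theorem sub_node_root_iff {l r : BinTree} {o a : ℕ} :
    (node l r).sub o a (o + l.size + 1) ↔ o < a ∧ a ≤ o + (node l r).size := by
  refine ⟨fun h => ⟨(sub_bounds h).1, (sub_bounds h).2.1⟩, fun h => Or.inl ⟨rfl, ?_⟩⟩
  rw [size_node] at h
  omega

theorem sub_node_left_iff {l r : BinTree} {o a b : ℕ} :
    l.sub o a b ↔ (node l r).sub o a b ∧ b ≤ o + l.size := by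
  refine ⟨fun h => ⟨Or.inr (Or.inl h), (sub_bounds h).2.2.2⟩, ?_⟩
  rintro ⟨⟨_, _, _⟩ | h | h, hb⟩
  · omega
  · exact h
  · have := sub_bounds h; omega

theorem sub_node_right_iff {l r : BinTree} {o a b : ℕ} :
    r.sub (o + l.size + 1) a b ↔ (node l r).sub o a b ∧ o + l.size + 1 < b := by
  refine ⟨fun h => ⟨Or.inr (Or.inr h), (sub_bounds h).2.2.1⟩, ?_⟩
  rintro ⟨⟨_, _, _⟩ | h | h, hb⟩
  · omega
  · have := sub_bounds h; omega
  · exact h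

theorem sub_refl {T : BinTree} {o b : ℕ} (h₁ : o < b) (h₂ : b ≤ o + T.size) : T.sub o b b := by
  induction T generalizing o with
  | leaf => simp only [size] at h₂; omega
  | node l r ihl ihr =>
    rw [size_node] at h₂
    rcases lt_trichotomy b (o + l.size + 1) with hb | rfl | hb
    · exact Or.inr (Or.inl (ihl h₁ (by omega)))
    · exact sub_node_root_iff.2 ⟨h₁, by rw [size_node]; omega⟩
    · exact Or.inr (Or.inr (ihr hb (by omega)))

theorem sub_trans {T : BinTree} {o a b c : ℕ} (hab : T.sub o a b) (hbc : T.sub o b c) :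
    T.sub o a c := by
  induction T generalizing o with
  | leaf => exact hab.elim
  | node l r ihl ihr =>
    have := sub_bounds hab
    rcases hbc with ⟨rfl, _, _⟩ | hbc | hbc
    · exact sub_node_root_iff.2 ⟨this.1, this.2.1⟩
    · have := sub_bounds hbc
      exact Or.inr (Or.inl (ihl (sub_node_left_iff.2 ⟨hab, by omega⟩) hbc))
    · have := sub_bounds hbc
      exact Or.inr (Or.inr (ihr (sub_node_right_iff.2 ⟨hab, by omega⟩) hbc))

theorem sub_antisymm {T : BinTree} {o a b : ℕ} (hab : T.sub o a b) (hba : T.sub o b a) :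
    a = b := by
  induction T generalizing o with
  | leaf => exact hab.elim
  | node l r ihl ihr =>
    have := sub_bounds hba
    rcases hab with ⟨rfl, _, _⟩ | hab | hab
    · rcases hba with ⟨_, _, _⟩ | hba | hba
      · omega
      · have := sub_bounds hba; omega
      · have := sub_bounds hba; omega
    · have := sub_bounds hab
      exact ihl hab (sub_node_left_iff.2 ⟨hba, by omega⟩)
    · have := sub_bounds hab
      exact ihr hab (sub_node_right_iff.2 ⟨hba, by omega⟩)

theorem ordConnected_sub (T : BinTree) (o b : ℕ) : Set.OrdConnected {a | T.sub o a b} := by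
  induction T generalizing o with
  | leaf => exact ⟨fun _ h => h.elim⟩
  | node l r ihl ihr =>
    refine ⟨fun a ha a' ha' x hx => ?_⟩
    simp only [Set.mem_ofPred_eq] at ha ha' ⊢
    have := sub_bounds ha
    have := sub_bounds ha'
    have := hx.1
    have := hx.2
    rcases ha with ⟨rfl, _, _⟩ | ha | ha
    · exact sub_node_root_iff.2 ⟨by omega, by omega⟩
    · exact Or.inr (Or.inl ((ihl o).out ha (sub_node_left_iff.2 ⟨ha', (sub_bounds ha).2.2.2⟩) hx))
    · exact Or.inr (Or.inr ((ihr _).out ha (sub_node_right_iff.2 ⟨ha', (sub_bounds ha).2.2.1⟩) hx))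

theorem sub_of_between {T : BinTree} {o a b x : ℕ} (h : T.sub o a b)
    (hx : a ≤ x ∧ x ≤ b ∨ b ≤ x ∧ x ≤ a) : T.sub o x b := by
  have := sub_bounds h
  have hbb : T.sub o b b := sub_refl (by omega) (by omega)
  rcases hx with hx | hx
  · exact (ordConnected_sub T o b).out h hbb hx
  · exact (ordConnected_sub T o b).out hbb h hx

/-- Comparing the two roots through `R` forces them to coincide, since each root sits above
every label of its own tree. -/
theorem eq_of_sub_iff {R : ℕ → ℕ → Prop} (hR : ∀ a b, a ≠ b → R a b ∨ R b a) :
    ∀ {T T' : BinTree} {o : ℕ}, T.size = T'.size →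
      (∀ a b, R a b → (T.sub o a b ↔ T'.sub o a b)) → T = T'
  | leaf, leaf, _, _, _ => rfl
  | leaf, node _ _, _, hsz, _ | node _ _, leaf, _, hsz, _ => by simp [size] at hsz
  | node l r, node l' r', o, hsz, h => by
    rw [size_node, size_node] at hsz
    have hl : l.size = l'.size := by
      by_contra hne
      have hroot : o + l.size + 1 ≠ o + l'.size + 1 := by omega
      have root : (node l r).sub o (o + l'.size + 1) (o + l.size + 1) :=
        sub_node_root_iff.2 ⟨by omega, by rw [size_node]; omega⟩
      have root' : (node l' r').sub o (o + l.size + 1) (o + l'.size + 1) :=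
        sub_node_root_iff.2 ⟨by omega, by rw [size_node]; omega⟩
      rcases hR _ _ hroot with hR' | hR'
      · exact hroot (sub_antisymm ((h _ _ hR').2 root') root)
      · exact hroot (sub_antisymm root' ((h _ _ hR').1 root))
    have hr : r.size = r'.size := by omega
    congr 1
    · refine eq_of_sub_iff (o := o) hR hl fun a b hab => ?_
      rw [sub_node_left_iff (r := r), h a b hab, hl, ← sub_node_left_iff]
    · refine eq_of_sub_iff (o := o + l.size + 1) hR hr fun a b hab => ?_
      rw [sub_node_right_iff, h a b hab, hl, ← sub_node_right_iff]

theorem Rot.size_eq {T T' : BinTree} (h : Rot T T') : T.size = T'.size := by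
  induction h with
  | base => simp only [size]; omega
  | left _ _ ih | right _ _ ih => simp only [size, ih]

theorem Rot.sub_of_gt {T T' : BinTree} (h : Rot T T') {o a b : ℕ} (hba : b < a)
    (hs : T.sub o a b) : T'.sub o a b := by
  induction h generalizing o with
  | base A B C =>
    simp only [sub, size] at hs ⊢
    rw [show o + (A.size + B.size + 1) + 1 = o + A.size + 1 + B.size + 1 by omega] at hs
    grind
  | left _ hrot ih | right _ hrot ih =>
    simp only [sub, hrot.size_eq] at hs ⊢
    grind

theorem Rot.sub_of_lt {T T' : BinTree} (h : Rot T T') {o a b : ℕ} (hab : a < b)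
    (hs : T'.sub o a b) : T.sub o a b := by
  induction h generalizing o with
  | base A B C =>
    simp only [sub, size] at hs ⊢
    rw [show o + (A.size + B.size + 1) + 1 = o + A.size + 1 + B.size + 1 by omega]
    grind
  | left _ hrot ih | right _ hrot ih =>
    simp only [sub, hrot.size_eq] at hs ⊢
    grind

theorem Rot.ne {T T' : BinTree} (h : Rot T T') : T ≠ T' := by
  induction h with
  | base A B C =>
    intro he
    have := congrArg size (node.inj he).1
    simp only [size] at this
    omega
  | left r _ ih => exact fun he => ih (node.inj he).1
  | right l _ ih => exact fun he => ih (node.inj he).2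

def subtreeMax : BinTree → ℕ → ℕ → ℕ
  | leaf, _, b => b
  | node l r, o, b =>
      if b ≤ o + l.size then subtreeMax l o b
      else if b = o + l.size + 1 then o + l.size + r.size + 1
      else subtreeMax r (o + l.size + 1) b

section subtreeMax

variable {l r : BinTree} {o b : ℕ}

theorem subtreeMax_node_left (h : b ≤ o + l.size) :
    subtreeMax (node l r) o b = subtreeMax l o b := by
  simp only [subtreeMax, if_pos h]

theorem subtreeMax_node_root : subtreeMax (node l r) o (o + l.size + 1) = o + (node l r).size := by
  simp only [subtreeMax, size]; split_ifs <;> omega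

theorem subtreeMax_node_right (h : o + l.size + 1 < b) :
    subtreeMax (node l r) o b = subtreeMax r (o + l.size + 1) b := by
  simp only [subtreeMax]; split_ifs <;> omega

end subtreeMax

theorem subtreeMax_bounds {T : BinTree} {o b : ℕ} (h₁ : o < b) (h₂ : b ≤ o + T.size) :
    b ≤ subtreeMax T o b ∧ subtreeMax T o b ≤ o + T.size := by
  induction T generalizing o with
  | leaf => exact ⟨le_rfl, h₂⟩
  | node l r ihl ihr =>
    rw [size_node] at h₂ ⊢
    rcases lt_trichotomy b (o + l.size + 1) with hb | rfl | hb
    · rw [subtreeMax_node_left (by omega)]; have := ihl h₁ (by omega); omega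
    · rw [subtreeMax_node_root, size_node]; omega
    · rw [subtreeMax_node_right hb]; have := ihr hb (by omega); omega

theorem sub_iff_le_subtreeMax {T : BinTree} {o a b : ℕ} (h₁ : o < b) (h₂ : b ≤ o + T.size)
    (hba : b ≤ a) : T.sub o a b ↔ a ≤ subtreeMax T o b := by
  induction T generalizing o with
  | leaf => simp only [size] at h₂; omega
  | node l r ihl ihr =>
    rw [size_node] at h₂
    rcases lt_trichotomy b (o + l.size + 1) with hb | rfl | hb
    · rw [subtreeMax_node_left (by omega), ← ihl h₁ (by omega), sub_node_left_iff (l := l) (r := r)]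
      exact ⟨fun h => ⟨h, by omega⟩, And.left⟩
    · rw [subtreeMax_node_root, sub_node_root_iff]; omega
    · rw [subtreeMax_node_right hb, ← ihr hb (by omega), sub_node_right_iff (l := l) (r := r)]
      exact ⟨fun h => ⟨h, hb⟩, And.left⟩

theorem eq_of_subtreeMax_eq {T T' : BinTree} {o : ℕ} (hsz : T.size = T'.size)
    (h : ∀ b, o < b → b ≤ o + T.size → subtreeMax T o b = subtreeMax T' o b) : T = T' := by
  refine eq_of_sub_iff (R := fun a b => b < a) (o := o)
    (fun a b hab => (Nat.lt_or_gt_of_ne hab).symm) hsz fun a b hba => ?_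
  by_cases hb : o < b ∧ b ≤ o + T.size
  · rw [sub_iff_le_subtreeMax hb.1 hb.2 hba.le, sub_iff_le_subtreeMax hb.1 (hsz ▸ hb.2) hba.le,
      h b hb.1 hb.2]
  · constructor <;> intro hs <;> have := sub_bounds hs <;> omega

theorem subtreeMax_le_of_sub_of_gt {T T' : BinTree} {o : ℕ} (hsz : T.size = T'.size)
    (hdec : ∀ a b, b < a → T.sub o a b → T'.sub o a b) {b : ℕ} (h₁ : o < b)
    (h₂ : b ≤ o + T.size) : subtreeMax T o b ≤ subtreeMax T' o b := by
  have hT := subtreeMax_bounds h₁ h₂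
  rcases hT.1.eq_or_lt with heq | hlt
  · exact heq ▸ (subtreeMax_bounds h₁ (hsz ▸ h₂)).1
  · refine (sub_iff_le_subtreeMax h₁ (hsz ▸ h₂) hT.1).1 (hdec _ b hlt ?_)
    exact (sub_iff_le_subtreeMax h₁ h₂ hT.1).2 le_rfl

theorem Rot.subtreeMax_le {T T'' : BinTree} (h : Rot T T'') {o b : ℕ} (h₁ : o < b)
    (h₂ : b ≤ o + T.size) : subtreeMax T o b ≤ subtreeMax T'' o b :=
  subtreeMax_le_of_sub_of_gt h.size_eq (fun _ _ => h.sub_of_gt) h₁ h₂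

theorem Rot.exists_subtreeMax_lt {T T'' : BinTree} (h : Rot T T'') (o : ℕ) :
    ∃ b, o < b ∧ b ≤ o + T.size ∧ subtreeMax T o b < subtreeMax T'' o b := by
  by_contra! hall
  exact h.ne (eq_of_subtreeMax_eq h.size_eq fun b h₁ h₂ =>
    le_antisymm (h.subtreeMax_le h₁ h₂) (hall b h₁ h₂))

theorem subtreeMax_le_of_le_subtreeMax {T : BinTree} {o x y : ℕ} (h₁ : o < x) (h₂ : x ≤ o + T.size)
    (hxy : x < y) (hy : y ≤ subtreeMax T o x) : subtreeMax T o y ≤ subtreeMax T o x := by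
  have hyx : T.sub o y x := (sub_iff_le_subtreeMax h₁ h₂ hxy.le).2 hy
  have := sub_bounds hyx
  have hmy := subtreeMax_bounds this.1 this.2.1
  refine (sub_iff_le_subtreeMax h₁ h₂ (by omega)).1 (sub_trans ?_ hyx)
  exact (sub_iff_le_subtreeMax this.1 this.2.1 hmy.1).2 le_rfl

theorem subtreeMax_rotate {A B C : BinTree} {o b : ℕ} (hb : b ≠ o + A.size + 1) :
    subtreeMax (node A (node B C)) o b = subtreeMax (node (node A B) C) o b := by
  simp only [subtreeMax, size]
  grind

theorem subtreeMax_rotate_le {A B C : BinTree} {o : ℕ} {h : ℕ → ℕ}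
    (hle : ∀ b, o < b → b ≤ o + (node (node A B) C).size →
      subtreeMax (node (node A B) C) o b ≤ h b)
    (hroot : o + (node (node A B) C).size ≤ h (o + A.size + 1)) :
    ∀ b, o < b → b ≤ o + (node A (node B C)).size → subtreeMax (node A (node B C)) o b ≤ h b := by
  intro b h₁ h₂
  by_cases hb : b = o + A.size + 1
  · subst hb
    rw [subtreeMax_node_root]
    simpa only [size, Nat.add_assoc, Nat.add_comm, Nat.add_left_comm] using hroot
  · rw [subtreeMax_rotate hb]
    exact hle b h₁ (by simpa only [size, Nat.add_assoc, Nat.add_comm, Nat.add_left_comm] using h₂)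

theorem subtreeMax_node_le_of_left {l l'' r : BinTree} {o : ℕ} {h : ℕ → ℕ}
    (hsz : l''.size = l.size)
    (hle : ∀ b, o < b → b ≤ o + (node l r).size → subtreeMax (node l r) o b ≤ h b)
    (hl'' : ∀ b, o < b → b ≤ o + l.size → subtreeMax l'' o b ≤ h b) :
    ∀ b, o < b → b ≤ o + (node l r).size → subtreeMax (node l'' r) o b ≤ h b := by
  intro b hb₁ hb₂
  rcases lt_trichotomy b (o + l.size + 1) with hb | rfl | hb
  · rw [subtreeMax_node_left (by omega)]
    exact hl'' b hb₁ (by omega)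
  · have := hle _ hb₁ hb₂
    rw [subtreeMax_node_root] at this
    rw [← hsz, subtreeMax_node_root, size_node, hsz, ← size_node]
    exact this
  · rw [subtreeMax_node_right (by omega), hsz, ← subtreeMax_node_right hb]
    exact hle b hb₁ hb₂

theorem subtreeMax_node_le_of_right {l r r'' : BinTree} {o : ℕ} {h : ℕ → ℕ}
    (hsz : r''.size = r.size)
    (hle : ∀ b, o < b → b ≤ o + (node l r).size → subtreeMax (node l r) o b ≤ h b)
    (hr'' : ∀ b, o + l.size + 1 < b → b ≤ o + l.size + 1 + r.size →
      subtreeMax r'' (o + l.size + 1) b ≤ h b) :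
    ∀ b, o < b → b ≤ o + (node l r).size → subtreeMax (node l r'') o b ≤ h b := by
  intro b hb₁ hb₂
  rw [size_node] at hb₂
  rcases lt_trichotomy b (o + l.size + 1) with hb | rfl | hb
  · rw [subtreeMax_node_left (by omega), ← subtreeMax_node_left (r := r) (by omega)]
    exact hle b hb₁ (by rw [size_node]; omega)
  · have := hle _ hb₁ (by rw [size_node]; omega)
    rw [subtreeMax_node_root, size_node, ← hsz] at this
    rw [subtreeMax_node_root, size_node]
    exact this
  · rw [subtreeMax_node_right hb]
    exact hr'' b hb (by omega)

/-- When `b₀` lies on the right branch of `node A B` but `h b₀` reaches beyond it, laminarity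
forces `h` to cover the whole tree at the root of `node A B`. -/
theorem top_le_of_laminar {A B C : BinTree} {o : ℕ} {h : ℕ → ℕ}
    (hle : ∀ b, o < b → b ≤ o + (node (node A B) C).size →
      subtreeMax (node (node A B) C) o b ≤ h b)
    (hlam : ∀ x y, o < x → x ≤ o + (node (node A B) C).size → x < y → y ≤ h x → h y ≤ h x)
    {b₀ : ℕ} (h₁ : o < b₀) (h₂ : b₀ ≤ o + (node A B).size)
    (hmax : subtreeMax (node A B) o b₀ = o + (node A B).size)
    (hgap : o + (node A B).size < h b₀) :
    o + (node (node A B) C).size ≤ h (o + A.size + 1) := by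
  simp only [size] at h₂ hgap hle hlam hmax ⊢
  have hσb₀ : o + A.size + 1 ≤ b₀ := by
    by_contra hlt
    rw [subtreeMax_node_left (by omega)] at hmax
    have := subtreeMax_bounds h₁ (show b₀ ≤ o + A.size by omega)
    omega
  have hσ := hle (o + A.size + 1) (by omega) (by omega)
  rw [subtreeMax_node_left (by rw [size_node]; omega), subtreeMax_node_root, size_node] at hσ
  have hb₀σ : h b₀ ≤ h (o + A.size + 1) := by
    rcases hσb₀.eq_or_lt with heq | hlt
    · rw [heq]
    · exact hlam _ _ (by omega) (by omega) hlt (by omega)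
  have hρ := hle (o + (A.size + B.size + 1) + 1) (by omega) (by omega)
  rw [← size_node, subtreeMax_node_root] at hρ
  have := hlam (o + A.size + 1) (o + (A.size + B.size + 1) + 1) (by omega) (by omega) (by omega)
    (by omega)
  simp only [size] at hρ
  omega

/-- The profile `h` stands for `subtreeMax T' o` of a target tree `T'`; the second hypothesis
is the laminarity of such a profile. Capping `h` at `o + l.size` lets the recursion descend into
the left subtree. -/
theorem exists_rot_subtreeMax_le :
    ∀ (T : BinTree) (o : ℕ) (h : ℕ → ℕ),
      (∀ b, o < b → b ≤ o + T.size → subtreeMax T o b ≤ h b) →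
      (∀ x y, o < x → x ≤ o + T.size → x < y → y ≤ h x → h y ≤ h x) →
      ∀ b₀, o < b₀ → b₀ ≤ o + T.size → subtreeMax T o b₀ < h b₀ → h b₀ ≤ o + T.size →
      ∃ T'', Rot T T'' ∧ ∀ b, o < b → b ≤ o + T.size → subtreeMax T'' o b ≤ h b
  | leaf, o, _, _, _, b₀, h₁, h₂, _, _ => by simp only [size] at h₂; omega
  | node l r, o, h, hle, hlam, b₀, h₁, h₂, hgap, htop => by
    rw [size_node] at h₂ htop
    rcases lt_trichotomy b₀ (o + l.size + 1) with hb₀ | rfl | hb₀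
    · rw [subtreeMax_node_left (by omega)] at hgap
      by_cases hcap : subtreeMax l o b₀ < min (h b₀) (o + l.size)
      · obtain ⟨l'', hrot, hl''⟩ := exists_rot_subtreeMax_le l o (fun b => min (h b) (o + l.size))
          (fun b hb₁ hb₂ => le_min
            (subtreeMax_node_left (r := r) hb₂ ▸ hle b hb₁ (by rw [size_node]; omega))
            (subtreeMax_bounds hb₁ hb₂).2)
          (fun x y hx₁ hx₂ hxy hy => min_le_min_right _
            (hlam x y hx₁ (by rw [size_node]; omega) hxy (hy.trans (min_le_left _ _))))
          b₀ h₁ (by omega) hcap (min_le_right _ _)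
        exact ⟨_, .left r hrot, subtreeMax_node_le_of_left hrot.size_eq.symm hle
          fun b hb₁ hb₂ => (hl'' b hb₁ hb₂).trans (min_le_left _ _)⟩
      · rw [not_lt, min_le_iff] at hcap
        have := subtreeMax_bounds h₁ (show b₀ ≤ o + l.size by omega)
        cases l with
        | leaf => simp only [size] at hb₀; omega
        | node A B =>
          have hroot := top_le_of_laminar hle hlam h₁ (by omega) (by omega) (by omega)
          refine ⟨_, .base A B r, fun b hb₁ hb₂ => subtreeMax_rotate_le hle hroot b hb₁ ?_⟩
          simp only [size] at hb₂ ⊢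
          omega
    · rw [subtreeMax_node_root, size_node] at hgap
      omega
    · rw [subtreeMax_node_right hb₀] at hgap
      obtain ⟨r'', hrot, hr''⟩ := exists_rot_subtreeMax_le r (o + l.size + 1) h
        (fun b hb₁ hb₂ => subtreeMax_node_right hb₁ ▸ hle b (by omega) (by rw [size_node]; omega))
        (fun x y hx₁ hx₂ hxy hy => hlam x y (by omega) (by rw [size_node]; omega) hxy hy)
        b₀ hb₀ (by omega) hgap (by omega)
      exact ⟨_, .right l hrot, subtreeMax_node_le_of_right hrot.size_eq.symm hle hr''⟩

end BinTree

open BinTree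

theorem tamariLE.sub_of_gt {T T' : BinTree} (h : tamariLE T T') {o a b : ℕ} (hba : b < a)
    (hs : T.sub o a b) : T'.sub o a b := by
  induction h with
  | refl => exact hs
  | tail _ hrot ih => exact hrot.sub_of_gt hba ih

theorem tamariLE.sub_of_lt {T T' : BinTree} (h : tamariLE T T') {o a b : ℕ} (hab : a < b)
    (hs : T'.sub o a b) : T.sub o a b := by
  induction h with
  | refl => exact hs
  | tail _ hrot ih => exact ih (hrot.sub_of_lt hab hs)

/-- Induction on the total gap `∑ b, (subtreeMax T' b - subtreeMax T b)`, which every rotation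
provided by `exists_rot_subtreeMax_le` strictly decreases. -/
theorem tamariLE_of_subtreeMax_le {T' : BinTree} :
    ∀ {T : BinTree}, T.size = T'.size →
      (∀ b, 0 < b → b ≤ T.size → subtreeMax T 0 b ≤ subtreeMax T' 0 b) → tamariLE T T' := by
  intro T
  induction hg : ∑ b ∈ Finset.Icc 1 T'.size, (subtreeMax T' 0 b - subtreeMax T 0 b)
    using Nat.strong_induction_on generalizing T with
  | _ g ih =>
    intro hsz hle
    by_cases heq : ∀ b, 0 < b → b ≤ T.size → subtreeMax T 0 b = subtreeMax T' 0 b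
    · rw [eq_of_subtreeMax_eq hsz fun b h₁ h₂ => heq b h₁ (by omega)]
      exact .refl
    push Not at heq
    obtain ⟨b₀, h₁, h₂, hb₀⟩ := heq
    have hT' := subtreeMax_bounds h₁ (show b₀ ≤ 0 + T'.size by omega)
    obtain ⟨T'', hrot, hT''⟩ := exists_rot_subtreeMax_le T 0 (subtreeMax T' 0)
      (fun b h₁ h₂ => hle b h₁ (by omega))
      (fun x y hx₁ hx₂ hxy hy => subtreeMax_le_of_le_subtreeMax hx₁ (by omega) hxy hy)
      b₀ h₁ (by omega) (lt_of_le_of_ne (hle b₀ h₁ h₂) hb₀) (by omega)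
    have hsz'' := hrot.size_eq
    obtain ⟨b₁, h₁, h₂, hlt⟩ := hrot.exists_subtreeMax_lt 0
    refine .head hrot (ih _ ?_ rfl (by omega) fun b h₁ h₂ => hT'' b h₁ (by omega))
    rw [← hg]
    refine Finset.sum_lt_sum (fun b hb => ?_) ⟨b₁, Finset.mem_Icc.2 ⟨h₁, by omega⟩, ?_⟩
    · have := Finset.mem_Icc.1 hb
      have := hrot.subtreeMax_le (o := 0) (b := b) (by omega) (by omega)
      omega
    · have := hT'' b₁ h₁ (by omega)
      omega

theorem tamariLE_of_sub_of_gt {T T' : BinTree} (hsz : T.size = T'.size)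
    (hdec : ∀ a b, b < a → T.sub 0 a b → T'.sub 0 a b) : tamariLE T T' :=
  tamariLE_of_subtreeMax_le hsz fun _ h₁ h₂ =>
    subtreeMax_le_of_sub_of_gt hsz hdec h₁ (by omega)

theorem sub_of_transGen {T₁ T₂ : BinTree} (h : tamariLE T₁ T₂) {a b : ℕ}
    (hab : Relation.TransGen (fun x y => decRel T₁ x y ∨ incRel T₂ x y) a b) :
    T₁.sub 0 a b ∧ T₂.sub 0 a b := by
  have sub_of_gen {x y : ℕ} : decRel T₁ x y ∨ incRel T₂ x y → T₁.sub 0 x y ∧ T₂.sub 0 x y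
    | .inl ⟨hlt, hs⟩ => ⟨hs, h.sub_of_gt hlt hs⟩
    | .inr ⟨hlt, hs⟩ => ⟨h.sub_of_lt hlt hs, hs⟩
  induction hab with
  | single hxy => exact sub_of_gen hxy
  | tail _ hyz ih =>
    exact ⟨sub_trans ih.1 (sub_of_gen hyz).1, sub_trans ih.2 (sub_of_gen hyz).2⟩

/-- The relations generated by `dec T₁` and `inc T₂` need no transitive closure. -/
theorem pairRel_iff {N : ℕ} {T₁ T₂ : BinTree} (h : tamariLE T₁ T₂) (hN : T₁.size = N)
    {a b : ℕ} : pairRel N T₁ T₂ a b ↔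
      (a = b ∧ 1 ≤ a ∧ a ≤ N) ∨ (b < a ∧ T₁.sub 0 a b) ∨ (a < b ∧ T₂.sub 0 a b) := by
  refine ⟨fun hab => ?_, fun hab => ?_⟩
  · rcases hab with hab | hab
    · exact .inl hab
    obtain ⟨hs₁, hs₂⟩ := sub_of_transGen h hab
    have := sub_bounds hs₁
    rcases lt_trichotomy a b with hlt | rfl | hlt
    · exact .inr (.inr ⟨hlt, hs₂⟩)
    · exact .inl ⟨rfl, by omega, by omega⟩
    · exact .inr (.inl ⟨hlt, hs₁⟩)
  · rcases hab with hab | hab | hab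
    · exact .inl hab
    · exact .inr (.single (.inl hab))
    · exact .inr (.single (.inr hab))

theorem sub_iff_pairRel_of_gt {N : ℕ} {T₁ T₂ : BinTree} (h : tamariLE T₁ T₂) (hN : T₁.size = N)
    {a b : ℕ} (hba : b < a) : T₁.sub 0 a b ↔ pairRel N T₁ T₂ a b := by
  rw [pairRel_iff h hN]
  constructor
  · exact fun hs => .inr (.inl ⟨hba, hs⟩)
  · rintro (⟨rfl, -⟩ | ⟨-, hs⟩ | ⟨hab, -⟩)
    · omega
    · exact hs
    · omega

theorem sub_iff_pairRel_of_lt {N : ℕ} {T₁ T₂ : BinTree} (h : tamariLE T₁ T₂) (hN : T₁.size = N)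
    {a b : ℕ} (hab : a < b) : T₂.sub 0 a b ↔ pairRel N T₁ T₂ a b := by
  rw [pairRel_iff h hN]
  constructor
  · exact fun hs => .inr (.inr ⟨hab, hs⟩)
  · rintro (⟨rfl, -⟩ | ⟨hba, -⟩ | ⟨-, hs⟩)
    · omega
    · omega
    · exact hs

/-- The interval-poset `P_{[T₁,T₂]}` of a Tamari interval. -/
def tamariIntervalPoset (N : ℕ) (T₁ T₂ : BinTree) (hN : T₁.size = N) (h : tamariLE T₁ T₂) :
    IntervalPoset where
  n := N
  rel := pairRel N T₁ T₂
  supp a b hab := by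
    rcases (pairRel_iff h hN).1 hab with hab | ⟨_, hs⟩ | ⟨_, hs⟩
    · omega
    · have := sub_bounds hs; omega
    · have := sub_bounds (h.sub_of_lt ‹_› hs); omega
  refl a h₁ h₂ := .inl ⟨rfl, h₁, h₂⟩
  antisymm a b hab hba := by
    rcases (pairRel_iff h hN).1 hab with hab | ⟨hlt, hs⟩ | ⟨hlt, hs⟩ <;>
      rcases (pairRel_iff h hN).1 hba with hba | ⟨hlt', hs'⟩ | ⟨hlt', hs'⟩ <;>
      first
        | omega
        | exact sub_antisymm hs (h.sub_of_lt hlt' hs')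
        | exact sub_antisymm (h.sub_of_lt hlt hs) hs'
  trans a b c hab hbc := by
    rcases hab with ⟨rfl, -⟩ | hab
    · exact hbc
    rcases hbc with ⟨rfl, -⟩ | hbc
    · exact .inr hab
    · exact .inr (hab.trans hbc)
  incCond a b c hac hab hbc := by
    rcases (pairRel_iff h hN).1 hac with hac | ⟨hlt, _⟩ | ⟨_, hs⟩
    · omega
    · omega
    · exact (pairRel_iff h hN).2 (.inr (.inr ⟨hbc, sub_of_between hs (.inl ⟨hab.le, hbc.le⟩)⟩))
  decCond a b c hca hab hbc := by
    rcases (pairRel_iff h hN).1 hca with hca | ⟨_, hs⟩ | ⟨hlt, _⟩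
    · omega
    · exact (pairRel_iff h hN).2 (.inr (.inl ⟨hab, sub_of_between hs (.inr ⟨hab.le, hbc.le⟩)⟩))
    · omega

namespace BinTree

/-- A tree on the labels `o+1, …, o+k`; `root` picks the root of every subtree from its range of
labels. -/
def treeOfRoot (root : ℕ → ℕ → ℕ) (o k : ℕ) : BinTree :=
  if o < root o k ∧ root o k ≤ o + k then
    node (treeOfRoot root o (root o k - o - 1)) (treeOfRoot root (root o k) (o + k - root o k))
  else leaf
termination_by k

section treeOfRoot

variable {root : ℕ → ℕ → ℕ} (hroot : ∀ o k, 0 < k → o < root o k ∧ root o k ≤ o + k)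
include hroot

theorem size_treeOfRoot (k : ℕ) : ∀ o, (treeOfRoot root o k).size = k := by
  induction k using Nat.strong_induction_on with
  | _ k ih =>
    intro o
    rw [treeOfRoot]
    split_ifs
    · have := hroot o k (by omega)
      rw [size_node, ih _ (by omega), ih _ (by omega)]
      omega
    · have := hroot o k
      simp only [size]
      omega

theorem sub_treeOfRoot_iff {o k a b : ℕ} (hk : 0 < k) :
    (treeOfRoot root o k).sub o a b ↔ (b = root o k ∧ o < a ∧ a ≤ o + k) ∨
      (treeOfRoot root o (root o k - o - 1)).sub o a b ∨
      (treeOfRoot root (root o k) (o + k - root o k)).sub (root o k) a b := by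
  have := hroot o k hk
  rw [treeOfRoot, if_pos this]
  simp only [sub, size_treeOfRoot hroot]
  rw [show o + (root o k - o - 1) + 1 = root o k by omega,
    show o + (root o k - o - 1) + (o + k - root o k) + 1 = o + k by omega]
  exact Iff.rfl

end treeOfRoot

end BinTree

namespace IntervalPoset

variable (I : IntervalPoset)

noncomputable def decRoot (o k : ℕ) : ℕ :=
  sInf {b | o < b ∧ ∀ c, b < c → c ≤ o + k → I.rel c b}

noncomputable def incRoot (o k : ℕ) : ℕ :=
  sSup {b | b ≤ o + k ∧ ∀ a, o < a → a < b → I.rel a b}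

theorem decRoot_spec {o k : ℕ} (hk : 0 < k) :
    o < I.decRoot o k ∧ I.decRoot o k ≤ o + k ∧
      ∀ c, I.decRoot o k < c → c ≤ o + k → I.rel c (I.decRoot o k) := by
  have hmem : o + k ∈ {b | o < b ∧ ∀ c, b < c → c ≤ o + k → I.rel c b} :=
    ⟨by omega, fun c h₁ h₂ => by omega⟩
  obtain ⟨h₁, h₂⟩ := Nat.sInf_mem ⟨_, hmem⟩
  exact ⟨h₁, Nat.sInf_le hmem, h₂⟩

theorem incRoot_spec {o k : ℕ} (hk : 0 < k) :
    o < I.incRoot o k ∧ I.incRoot o k ≤ o + k ∧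
      ∀ a, o < a → a < I.incRoot o k → I.rel a (I.incRoot o k) := by
  have hbdd : BddAbove {b | b ≤ o + k ∧ ∀ a, o < a → a < b → I.rel a b} := ⟨o + k, fun _ h => h.1⟩
  have hmem : o + 1 ∈ {b | b ≤ o + k ∧ ∀ a, o < a → a < b → I.rel a b} :=
    ⟨by omega, fun a h₁ h₂ => by omega⟩
  obtain ⟨h₁, h₂⟩ := Nat.sSup_mem ⟨_, hmem⟩ hbdd
  exact ⟨le_csSup hbdd hmem, h₁, h₂⟩

theorem lt_decRoot_of_rel {o k a b : ℕ} (hb : o < b) (hbr : b < I.decRoot o k) (hba : b < a)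
    (ha : a ≤ o + k) (hab : I.rel a b) : a < I.decRoot o k := by
  obtain ⟨-, -, hrc⟩ := I.decRoot_spec (k := k) (by omega)
  by_contra! hra
  have hrb : I.rel (I.decRoot o k) b := by
    rcases hra.eq_or_lt with heq | hlt
    · rwa [heq]
    · exact I.decCond b _ a hab hbr hlt
  have hbelow : ∀ c, b < c → c ≤ o + k → I.rel c b := by
    intro c hc₁ hc₂
    rcases lt_trichotomy c (I.decRoot o k) with hc | rfl | hc
    · exact I.decCond b c _ hrb hc₁ hc
    · exact hrb
    · exact I.trans _ _ _ (hrc c hc hc₂) hrb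
  have : I.decRoot o k ≤ b := Nat.sInf_le ⟨hb, hbelow⟩
  omega

theorem incRoot_lt_of_rel {o k a b : ℕ} (hb : b ≤ o + k) (hrb : I.incRoot o k < b) (hab : a < b)
    (ha : o < a) (hrel : I.rel a b) : I.incRoot o k < a := by
  obtain ⟨-, -, hrc⟩ := I.incRoot_spec (k := k) (by omega)
  by_contra! har
  have hrb' : I.rel (I.incRoot o k) b := by
    rcases har.eq_or_lt with heq | hlt
    · rwa [← heq]
    · exact I.incCond a _ b hrel hlt hrb
  have hbelow : ∀ a', o < a' → a' < b → I.rel a' b := by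
    intro a' ha₁ ha₂
    rcases lt_trichotomy a' (I.incRoot o k) with ha' | rfl | ha'
    · exact I.trans _ _ _ (hrc a' ha₁ ha') hrb'
    · exact hrb'
    · exact I.incCond a a' b hrel (by omega) ha₂
  have hbdd : BddAbove {b | b ≤ o + k ∧ ∀ a, o < a → a < b → I.rel a b} := ⟨o + k, fun _ h => h.1⟩
  have : b ≤ I.incRoot o k := le_csSup hbdd ⟨hb, hbelow⟩
  omega

theorem lt_incRoot_of_rel {o k a b : ℕ} (hb : o < b) (hbr : b < I.incRoot o k) (hba : b < a)
    (ha : a ≤ o + k) (hrel : I.rel a b) : a < I.incRoot o k := by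
  obtain ⟨-, -, hrc⟩ := I.incRoot_spec (k := k) (by omega)
  by_contra! hra
  have hrb : I.rel (I.incRoot o k) b := by
    rcases hra.eq_or_lt with heq | hlt
    · rwa [heq]
    · exact I.decCond b _ a hrel hbr hlt
  exact hbr.ne (I.antisymm _ _ (hrc b hb hbr) hrb)

theorem decRoot_bounds (o k : ℕ) (hk : 0 < k) : o < I.decRoot o k ∧ I.decRoot o k ≤ o + k :=
  ⟨(I.decRoot_spec hk).1, (I.decRoot_spec hk).2.1⟩

theorem incRoot_bounds (o k : ℕ) (hk : 0 < k) : o < I.incRoot o k ∧ I.incRoot o k ≤ o + k :=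
  ⟨(I.incRoot_spec hk).1, (I.incRoot_spec hk).2.1⟩

theorem sub_decTree_iff (k : ℕ) : ∀ {o a b : ℕ}, b < a →
    ((treeOfRoot I.decRoot o k).sub o a b ↔ o < b ∧ a ≤ o + k ∧ I.rel a b) := by
  induction k using Nat.strong_induction_on with
  | _ k ih =>
    intro o a b hba
    rcases Nat.eq_zero_or_pos k with rfl | hk
    · refine ⟨fun hs => ?_, fun h => by omega⟩
      have := sub_bounds hs
      rw [size_treeOfRoot I.decRoot_bounds] at this
      omega
    obtain ⟨hr₁, hr₂, hrc⟩ := I.decRoot_spec (o := o) hk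
    rw [sub_treeOfRoot_iff I.decRoot_bounds hk, ih _ (by omega) hba, ih _ (by omega) hba]
    constructor
    · rintro (⟨rfl, _, _⟩ | ⟨_, _, hrel⟩ | ⟨_, _, hrel⟩)
      · exact ⟨hr₁, by omega, hrc a hba (by omega)⟩
      · exact ⟨by omega, by omega, hrel⟩
      · exact ⟨by omega, by omega, hrel⟩
    · rintro ⟨hb, ha, hrel⟩
      rcases lt_trichotomy b (I.decRoot o k) with hbr | rfl | hbr
      · have := I.lt_decRoot_of_rel hb hbr hba ha hrel
        exact .inr (.inl ⟨hb, by omega, hrel⟩)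
      · exact .inl ⟨rfl, by omega, ha⟩
      · exact .inr (.inr ⟨hbr, by omega, hrel⟩)

theorem sub_incTree_iff (k : ℕ) : ∀ {o a b : ℕ}, a < b →
    ((treeOfRoot I.incRoot o k).sub o a b ↔ o < a ∧ b ≤ o + k ∧ I.rel a b) := by
  induction k using Nat.strong_induction_on with
  | _ k ih =>
    intro o a b hab
    rcases Nat.eq_zero_or_pos k with rfl | hk
    · refine ⟨fun hs => ?_, fun h => by omega⟩
      have := sub_bounds hs
      rw [size_treeOfRoot I.incRoot_bounds] at this
      omega
    obtain ⟨hr₁, hr₂, hrc⟩ := I.incRoot_spec (o := o) hk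
    rw [sub_treeOfRoot_iff I.incRoot_bounds hk, ih _ (by omega) hab, ih _ (by omega) hab]
    constructor
    · rintro (⟨rfl, _, _⟩ | ⟨_, _, hrel⟩ | ⟨_, _, hrel⟩)
      · exact ⟨by omega, by omega, hrc a (by omega) hab⟩
      · exact ⟨by omega, by omega, hrel⟩
      · exact ⟨by omega, by omega, hrel⟩
    · rintro ⟨ha, hb, hrel⟩
      rcases lt_trichotomy b (I.incRoot o k) with hbr | rfl | hbr
      · exact .inr (.inl ⟨ha, by omega, hrel⟩)
      · exact .inl ⟨rfl, ha, by omega⟩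
      · have := I.incRoot_lt_of_rel hb hbr hab ha hrel
        exact .inr (.inr ⟨this, by omega, hrel⟩)

theorem incTree_sub_of_rel (k : ℕ) : ∀ {o a b : ℕ}, o < b → b < a → a ≤ o + k → I.rel a b →
    (treeOfRoot I.incRoot o k).sub o a b := by
  induction k using Nat.strong_induction_on with
  | _ k ih =>
    intro o a b hb hba ha hrel
    have hk : 0 < k := by omega
    rw [sub_treeOfRoot_iff I.incRoot_bounds hk]
    have := I.incRoot_bounds o k hk
    rcases lt_trichotomy b (I.incRoot o k) with hbr | rfl | hbr
    · have := I.lt_incRoot_of_rel hb hbr hba ha hrel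
      exact .inr (.inl (ih _ (by omega) hb hba (by omega) hrel))
    · exact .inl ⟨rfl, by omega, ha⟩
    · exact .inr (.inr (ih _ (by omega) hbr hba (by omega) hrel))

noncomputable def lowerTree : BinTree := treeOfRoot I.decRoot 0 I.n

noncomputable def upperTree : BinTree := treeOfRoot I.incRoot 0 I.n

theorem size_lowerTree : I.lowerTree.size = I.n := size_treeOfRoot I.decRoot_bounds _ _

theorem size_upperTree : I.upperTree.size = I.n := size_treeOfRoot I.incRoot_bounds _ _

theorem sub_lowerTree_iff {a b : ℕ} (hba : b < a) : I.lowerTree.sub 0 a b ↔ I.rel a b := by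
  rw [lowerTree, sub_decTree_iff I _ hba]
  exact ⟨fun h => h.2.2, fun h => have := I.supp a b h; ⟨by omega, by omega, h⟩⟩

theorem sub_upperTree_iff {a b : ℕ} (hab : a < b) : I.upperTree.sub 0 a b ↔ I.rel a b := by
  rw [upperTree, sub_incTree_iff I _ hab]
  exact ⟨fun h => h.2.2, fun h => have := I.supp a b h; ⟨by omega, by omega, h⟩⟩

theorem lowerTree_le_upperTree : tamariLE I.lowerTree I.upperTree := by
  refine tamariLE_of_sub_of_gt (I.size_lowerTree.trans I.size_upperTree.symm) fun a b hba hs => ?_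
  have hrel := (I.sub_lowerTree_iff hba).1 hs
  have := I.supp a b hrel
  exact I.incTree_sub_of_rel _ (by omega) hba (by omega) hrel

theorem rel_eq_pairRel : I.rel = pairRel I.n I.lowerTree I.upperTree := by
  have h := I.lowerTree_le_upperTree
  ext a b
  rcases lt_trichotomy a b with hab | rfl | hab
  · rw [← I.sub_upperTree_iff hab, sub_iff_pairRel_of_lt h I.size_lowerTree hab]
  · rw [pairRel_iff h I.size_lowerTree]
    refine ⟨fun h => have := I.supp a a h; .inl ⟨rfl, by omega, by omega⟩, ?_⟩
    rintro (⟨-, h₁, h₂⟩ | ⟨hlt, -⟩ | ⟨hlt, -⟩)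
    · exact I.refl a h₁ h₂
    all_goals omega
  · rw [← I.sub_lowerTree_iff hab, sub_iff_pairRel_of_gt h I.size_lowerTree hab]

end IntervalPoset

theorem IntervalPoset.existsUnique_tamariLE (I : IntervalPoset) :
    ∃! p : BinTree × BinTree, p.1.size = I.n ∧ p.2.size = I.n ∧ tamariLE p.1 p.2 ∧
      I.rel = pairRel I.n p.1 p.2 := by
  refine ⟨(I.lowerTree, I.upperTree), ⟨I.size_lowerTree, I.size_upperTree,
    I.lowerTree_le_upperTree, I.rel_eq_pairRel⟩, ?_⟩
  rintro ⟨T₁, T₂⟩ ⟨h₁, h₂, h, hrel⟩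
  have hI := I.rel_eq_pairRel
  have hlow := I.lowerTree_le_upperTree
  refine Prod.ext (eq_of_sub_iff (R := fun a b => b < a) (o := 0)
    (fun _ _ hab => (Nat.lt_or_gt_of_ne hab).symm) (h₁.trans I.size_lowerTree.symm)
    fun a b hba => ?_) (eq_of_sub_iff (R := (· < ·)) (o := 0) (fun _ _ => Nat.lt_or_gt_of_ne)
    (h₂.trans I.size_upperTree.symm) fun a b hab => ?_)
  · rw [sub_iff_pairRel_of_gt h h₁ hba, ← hrel, hI,
      ← sub_iff_pairRel_of_gt hlow I.size_lowerTree hba]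
  · rw [sub_iff_pairRel_of_lt h h₁ hab, ← hrel, hI,
      ← sub_iff_pairRel_of_lt hlow I.size_lowerTree hab]

theorem tamariLE.mCond {m n : ℕ} {T₁ T₂ : BinTree} (h : tamariLE T₁ T₂) (hT₁ : mCond m n T₁) :
    mCond m n T₂ :=
  fun i j h₁ h₂ h₃ h₄ => h.sub_of_gt (Nat.lt_succ_self _) (hT₁ i j h₁ h₂ h₃ h₄)

theorem mCond_iff_isMIntervalPoset {m n : ℕ} {T₁ T₂ : BinTree} (h : tamariLE T₁ T₂)
    (hN : T₁.size = n * m) {I : IntervalPoset} (hI : I.n = n * m)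
    (hrel : I.rel = pairRel (n * m) T₁ T₂) : mCond m n T₁ ↔ IsMIntervalPoset m n I := by
  simp only [mCond, IsMIntervalPoset, hI, hrel, true_and,
    sub_iff_pairRel_of_gt h hN (Nat.lt_succ_self _)]

theorem stmt15_general (m n : ℕ) :
    (∀ T1 T2 : BinTree, T1.size = n * m → T2.size = n * m → tamariLE T1 T2 →
      mCond m n T1 → mCond m n T2) ∧
    (∀ T1 T2 : BinTree, T1.size = n * m → T2.size = n * m → tamariLE T1 T2 →
      (mCond m n T1 ↔
        ∃ I : IntervalPoset, IsMIntervalPoset m n I ∧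
          I.rel = pairRel (n * m) T1 T2)) ∧
    (∀ I : IntervalPoset, IsMIntervalPoset m n I →
      ∃! p : BinTree × BinTree,
        p.1.size = n * m ∧ p.2.size = n * m ∧ tamariLE p.1 p.2 ∧
          mCond m n p.1 ∧ I.rel = pairRel (n * m) p.1 p.2) := by
  refine ⟨fun _ _ _ _ h => h.mCond, fun T₁ T₂ h₁ _ h => ⟨fun hT₁ => ?_, ?_⟩, fun I hI => ?_⟩
  · exact ⟨tamariIntervalPoset _ T₁ T₂ h₁ h,
      (mCond_iff_isMIntervalPoset h h₁ rfl rfl).1 hT₁, rfl⟩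
  · rintro ⟨I, hI, hrel⟩
    exact (mCond_iff_isMIntervalPoset h h₁ hI.1 hrel).2 hI
  · obtain ⟨p, ⟨h₁, h₂, h, hrel⟩, huniq⟩ := I.existsUnique_tamariLE
    rw [hI.1] at h₁ h₂ hrel huniq
    refine ⟨p, ⟨h₁, h₂, h, (mCond_iff_isMIntervalPoset h h₁ hI.1 hrel).2 hI, hrel⟩, ?_⟩
    exact fun q ⟨hq₁, hq₂, hq, _, hqrel⟩ => huniq q ⟨hq₁, hq₂, hq, hqrel⟩

/-- Under the bijection between Tamari intervals of size `n·m` and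
interval-posets of size `n·m`, the intervals of the `m`-Tamari lattice
(intervals whose lower tree satisfies the `m`-binary chain condition—which
forces the upper one to satisfy it too) correspond exactly to the
`m`-interval-posets of size `n`. -/
theorem stmt15 (m n : ℕ) (hm : 1 ≤ m) (hn : 1 ≤ n) :
    (∀ T1 T2 : BinTree, T1.size = n * m → T2.size = n * m → tamariLE T1 T2 →
      mCond m n T1 → mCond m n T2) ∧
    (∀ T1 T2 : BinTree, T1.size = n * m → T2.size = n * m → tamariLE T1 T2 →
      (mCond m n T1 ↔
        ∃ I : IntervalPoset, IsMIntervalPoset m n I ∧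
          I.rel = pairRel (n * m) T1 T2)) ∧
    (∀ I : IntervalPoset, IsMIntervalPoset m n I →
      ∃! p : BinTree × BinTree,
        p.1.size = n * m ∧ p.2.size = n * m ∧ tamariLE p.1 p.2 ∧
          mCond m n p.1 ∧ I.rel = pairRel (n * m) p.1 p.2) :=
  stmt15_general m n
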